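/- (Lemma 3.1) Let (X, d, μ) be an upper doubling, geometrically doubling metric measure space, r ∈ (0,1), and M♯_r(f) := [M♯(|f|^r)]^{1/r}, where M♯ is the sharp maximal function. If f ∈ RBMO(μ), then M♯_r(f) ∈ L^∞(μ) and ‖M♯_r(f)‖_{L^∞(μ)} ≤ C ‖f‖_{RBMO(μ)}. -/

import Mathlib

open Metric MeasureTheory
open scoped ENNReal

/-- Tolsa-Hytönen coefficient `δ(B, S)` of two balls `B ⊆ S`. -/
noncomputable def delta {X : Type*} [MetricSpace X] [MeasurableSpace X]
    (μ : Measure X) (Λ : X → ℝ → ℝ) (cB : X) (rB : ℝ) (cS : X) (rS : ℝ) : ℝ :=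
  (∫⁻ x in ball cS (2 * rS) \ ball cB rB,
      ENNReal.ofReal ((Λ cB (dist x cB))⁻¹) ∂μ).toReal

open scoped Classical in
/-- The exponent of the smallest `(6, β₆)`-doubling dilate `6^j B` of the ball `B(c, r)`. -/
noncomputable def tilde6 {X : Type*} [MetricSpace X] [MeasurableSpace X]
    (μ : Measure X) (β₆ : ℝ) (c : X) (r : ℝ) : ℕ :=
  if h : ∃ j : ℕ, μ (ball c (6 ^ (j + 1) * r)) ≤ ENNReal.ofReal β₆ * μ (ball c (6 ^ j * r))
  then Nat.find h else 0

/-- The sharp maximal function `M♯(f)` on a non-homogeneous metric measure space. -/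
noncomputable def msharp {X : Type*} [MetricSpace X] [MeasurableSpace X]
    (μ : Measure X) (Λ : X → ℝ → ℝ) (β₆ : ℝ) (f : X → ℝ) (x : X) : ℝ≥0∞ :=
  (⨆ (c : X) (r : ℝ) (_ : 0 < r ∧ x ∈ ball c r),
    ENNReal.ofReal ((∫ y in ball c r,
        |f y - ⨍ z in ball c (6 ^ tilde6 μ β₆ c r * r), f z ∂μ| ∂μ) /
      (μ (ball c (5 * r))).toReal)) ⊔
  (⨆ (cB : X) (rB : ℝ) (cS : X) (rS : ℝ)
      (_ : 0 < rB ∧ 0 < rS ∧ x ∈ ball cB rB ∧ ball cB rB ⊆ ball cS rS ∧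
        μ (ball cB (6 * rB)) ≤ ENNReal.ofReal β₆ * μ (ball cB rB) ∧
        μ (ball cS (6 * rS)) ≤ ENNReal.ofReal β₆ * μ (ball cS rS)),
    ENNReal.ofReal (|(⨍ z in ball cB rB, f z ∂μ) - ⨍ z in ball cS rS, f z ∂μ| /
      (1 + delta μ Λ cB rB cS rS)))

/-!
For `0 < r ≤ 1` the map `t ↦ |t| ^ r` satisfies `||s| ^ r - |t| ^ r| ≤ |s - t| ^ r` and is concave,
so by Jensen `|⨍_B |f| ^ r - |f_B| ^ r| ≤ (⨍_B |f - f_B|) ^ r`: the numbers `|f_B| ^ r` play for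
`|f| ^ r` the role that the `f_B` play for `f`, with constant `K ^ r`. Both suprema defining
`M♯(|f| ^ r)` are then at most a constant times `K ^ r`. The one non-formal input is a uniform bound
on `δ(B, B̃⁶)`: the dilates `6 ^ i B` below `B̃⁶` are not doubling, so their measures grow at
least like `β₆ ^ i`, faster than `λ`, which grows like `(C_λ ^ log₂ 6) ^ i`; hence `δ(B, B̃⁶)` is
dominated by a convergent geometric series. The same comparison shows that `B̃⁶` exists.
-/

namespace Real

lemma rpow_sub_rpow_le_rpow_sub {r u v : ℝ} (hr0 : 0 ≤ r) (hr1 : r ≤ 1) (hv : 0 ≤ v)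
    (hvu : v ≤ u) : u ^ r - v ^ r ≤ (u - v) ^ r := by
  have := rpow_add_le_add_rpow (sub_nonneg.2 hvu) hv hr0 hr1
  rw [sub_add_cancel] at this
  linarith

lemma abs_abs_rpow_sub_abs_rpow_le {r : ℝ} (hr0 : 0 ≤ r) (hr1 : r ≤ 1) (s t : ℝ) :
    |(|s| ^ r) - |t| ^ r| ≤ |s - t| ^ r := by
  wlog hts : |t| ≤ |s| generalizing s t
  · rw [abs_sub_comm, abs_sub_comm s]
    exact this t s (le_of_not_ge hts)
  rw [abs_of_nonneg (sub_nonneg.2 (rpow_le_rpow (abs_nonneg t) hts hr0))]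
  calc |s| ^ r - |t| ^ r ≤ (|s| - |t|) ^ r :=
        rpow_sub_rpow_le_rpow_sub hr0 hr1 (abs_nonneg t) hts
    _ ≤ |s - t| ^ r := rpow_le_rpow (sub_nonneg.2 hts) (abs_sub_abs_le_abs_sub s t) hr0

lemma rpow_le_rpow_mul_of_le_mul {r x K M : ℝ} (hr0 : 0 ≤ r) (hr1 : r ≤ 1) (hx : 0 ≤ x)
    (hK : 0 ≤ K) (hM : 1 ≤ M) (h : x ≤ K * M) : x ^ r ≤ K ^ r * M :=
  calc x ^ r ≤ (K * M) ^ r := rpow_le_rpow hx h hr0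
    _ = K ^ r * M ^ r := mul_rpow hK (by linarith)
    _ ≤ K ^ r * M :=
        mul_le_mul_of_nonneg_left (rpow_le_self_of_one_le hM hr1) (rpow_nonneg hK r)

end Real

section Average

variable {α : Type*} [MeasurableSpace α] {μ : Measure α} {s : Set α} {r : ℝ}

lemma MeasureTheory.IntegrableOn.rpow_of_le_one {h : α → ℝ} (hint : IntegrableOn h s μ)
    (hs : μ s ≠ ∞) (hnn : ∀ x, 0 ≤ h x) (hr0 : 0 ≤ r) (hr1 : r ≤ 1) :
    IntegrableOn (fun x => h x ^ r) s μ := by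
  refine ((integrableOn_const hs (C := (1 : ℝ))).add hint).mono'
    ((Real.continuous_rpow_const hr0).comp_aestronglyMeasurable hint.aestronglyMeasurable)
    (.of_forall fun x => ?_)
  rw [Real.norm_of_nonneg (Real.rpow_nonneg (hnn x) r), Pi.add_apply]
  rcases le_total (h x) 1 with hx | hx
  · linarith [Real.rpow_le_one (hnn x) hx hr0, hnn x]
  · linarith [Real.rpow_le_self_of_one_le hx hr1]

variable {h : α → ℝ}

lemma setAverage_rpow_le_rpow_setAverage (h0 : μ s ≠ 0) (hs : μ s ≠ ∞) (hnn : ∀ x, 0 ≤ h x)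
    (hint : IntegrableOn h s μ) (hr0 : 0 ≤ r) (hr1 : r ≤ 1) :
    ⨍ x in s, h x ^ r ∂μ ≤ (⨍ x in s, h x ∂μ) ^ r :=
  (Real.concaveOn_rpow hr0 hr1).le_map_set_average (Real.continuous_rpow_const hr0).continuousOn
    isClosed_Ici h0 hs (.of_forall fun x => Set.mem_Ici.2 (hnn x)) hint
    (hint.rpow_of_le_one hs hnn hr0 hr1)

lemma setIntegral_rpow_le (h0 : μ s ≠ 0) (hs : μ s ≠ ∞) (hnn : ∀ x, 0 ≤ h x)
    (hint : IntegrableOn h s μ) (hr0 : 0 ≤ r) (hr1 : r ≤ 1) :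
    ∫ x in s, h x ^ r ∂μ ≤ (∫ x in s, h x ∂μ) ^ r * μ.real s ^ (1 - r) := by
  have hμ : 0 < μ.real s := ENNReal.toReal_pos h0 hs
  have hjensen := setAverage_rpow_le_rpow_setAverage h0 hs hnn hint hr0 hr1
  rw [setAverage_eq, setAverage_eq, smul_eq_mul, smul_eq_mul, ← div_eq_inv_mul,
    ← div_eq_inv_mul, div_le_iff₀ hμ, Real.div_rpow (integral_nonneg hnn) hμ.le] at hjensen
  rw [Real.rpow_sub hμ, Real.rpow_one]
  exact hjensen.trans_eq (by field_simp)

lemma abs_setAverage_abs_rpow_sub_le {f : α → ℝ} (h0 : μ s ≠ 0) (hs : μ s ≠ ∞)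
    (hf : IntegrableOn f s μ) (a : ℝ) (hr0 : 0 ≤ r) (hr1 : r ≤ 1) :
    |(⨍ x in s, |f x| ^ r ∂μ) - |a| ^ r| ≤ (⨍ x in s, |f x - a| ∂μ) ^ r := by
  have hfa : IntegrableOn (fun x => |f x - a|) s μ := (hf.sub (integrableOn_const hs)).abs
  have hf' : IntegrableOn (fun x => |f x|) s μ := hf.abs
  refine le_trans ?_ (setAverage_rpow_le_rpow_setAverage h0 hs (fun _ => abs_nonneg _) hfa
    hr0 hr1)
  -- Averages are integrals against the normalised measure, to which linearity and monotonicity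
  -- of the integral apply.
  have hν : ∀ {g : α → ℝ}, IntegrableOn g s μ →
      Integrable g ((μ.restrict s Set.univ)⁻¹ • μ.restrict s) :=
    fun hg => hg.smul_measure (by simpa using h0)
  rw [← setAverage_const h0 hs (|a| ^ r)]
  simp only [average_eq']
  have hfr := hν (hf'.rpow_of_le_one hs (fun _ => abs_nonneg _) hr0 hr1)
  have hconst := hν (integrableOn_const hs (C := |a| ^ r))
  rw [← integral_sub hfr hconst]
  exact abs_integral_le_integral_abs.trans <| integral_mono (hfr.sub hconst).abs
    (hν (hfa.rpow_of_le_one hs (fun _ => abs_nonneg _) hr0 hr1))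
    fun x => Real.abs_abs_rpow_sub_abs_rpow_le hr0 hr1 (f x) a

end Average

structure IsDoublingFunction {X : Type*} (Λ : X → ℝ → ℝ) (Cl : ℝ) : Prop where
  pos : ∀ (x : X) (r : ℝ), 0 < r → 0 < Λ x r
  mono : ∀ (x : X) (r s : ℝ), 0 < r → r ≤ s → Λ x r ≤ Λ x s
  le_mul_half : ∀ (x : X) (r : ℝ), 0 < r → Λ x r ≤ Cl * Λ x (r / 2)

namespace IsDoublingFunction

variable {X : Type*} {Λ : X → ℝ → ℝ} {Cl : ℝ}

lemma one_le (hΛ : IsDoublingFunction Λ Cl) (x : X) : 1 ≤ Cl := by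
  have h1 := hΛ.le_mul_half x 1 one_pos
  have h2 := hΛ.mono x (1 / 2) 1 (by norm_num) (by norm_num)
  have h3 := hΛ.pos x (1 / 2) (by norm_num)
  nlinarith

lemma one_le_rpow_logb (hΛ : IsDoublingFunction Λ Cl) (x : X) : 1 ≤ Cl ^ Real.logb 2 6 :=
  Real.one_le_rpow (hΛ.one_le x) (Real.logb_nonneg (by norm_num) (by norm_num))

lemma le_two_pow_mul (hΛ : IsDoublingFunction Λ Cl) (x : X) {s : ℝ} (hs : 0 < s) (k : ℕ) :
    Λ x (2 ^ k * s) ≤ Cl ^ k * Λ x s := by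
  induction k with
  | zero => simp
  | succ k ih =>
    calc Λ x (2 ^ (k + 1) * s) ≤ Cl * Λ x (2 ^ (k + 1) * s / 2) :=
          hΛ.le_mul_half x _ (by positivity)
      _ = Cl * Λ x (2 ^ k * s) := by ring_nf
      _ ≤ Cl * (Cl ^ k * Λ x s) :=
          mul_le_mul_of_nonneg_left ih (zero_le_one.trans (hΛ.one_le x))
      _ = Cl ^ (k + 1) * Λ x s := by ring

lemma le_six_pow_mul (hΛ : IsDoublingFunction Λ Cl) (x : X) {s : ℝ} (hs : 0 < s) (m : ℕ) :
    Λ x (6 ^ m * s) ≤ Cl * (Cl ^ Real.logb 2 6) ^ m * Λ x s := by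
  have hCl := hΛ.one_le x
  set k := ⌈Real.logb 2 6 * m⌉₊
  have hk : Real.logb 2 6 * m ≤ k := Nat.le_ceil _
  have hk' : (k : ℝ) ≤ Real.logb 2 6 * m + 1 :=
    (Nat.ceil_lt_add_one (mul_nonneg (Real.logb_nonneg (by norm_num) (by norm_num))
      m.cast_nonneg)).le
  have h6 : (6 : ℝ) ^ m ≤ 2 ^ k := by
    calc (6 : ℝ) ^ m = ((2 : ℝ) ^ Real.logb 2 6) ^ m := by
          rw [Real.rpow_logb (by norm_num) (by norm_num) (by norm_num)]
      _ = 2 ^ (Real.logb 2 6 * m) := (Real.rpow_mul_natCast (by norm_num) _ _).symm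
      _ ≤ 2 ^ (k : ℝ) := Real.rpow_le_rpow_of_exponent_le (by norm_num) hk
      _ = 2 ^ k := Real.rpow_natCast 2 k
  have hClk : Cl ^ k ≤ Cl * (Cl ^ Real.logb 2 6) ^ m := by
    calc Cl ^ k = Cl ^ (k : ℝ) := (Real.rpow_natCast Cl k).symm
      _ ≤ Cl ^ (Real.logb 2 6 * m + 1) := Real.rpow_le_rpow_of_exponent_le hCl hk'
      _ = Cl * (Cl ^ Real.logb 2 6) ^ m := by
          rw [Real.rpow_add (by linarith), Real.rpow_one, Real.rpow_mul_natCast (by linarith),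
            mul_comm]
  calc Λ x (6 ^ m * s) ≤ Λ x (2 ^ k * s) := hΛ.mono x _ _ (by positivity) (by gcongr)
    _ ≤ Cl ^ k * Λ x s := hΛ.le_two_pow_mul x hs k
    _ ≤ Cl * (Cl ^ Real.logb 2 6) ^ m * Λ x s :=
        mul_le_mul_of_nonneg_right hClk (hΛ.pos x s hs).le

end IsDoublingFunction

section SixPowDilates

variable {X : Type*} [MetricSpace X] [MeasurableSpace X] {μ : Measure X} {Λ : X → ℝ → ℝ}
  {Cl β₆ : ℝ}

lemma measureReal_ball_le (hΛpos : ∀ (x : X) (r : ℝ), 0 < r → 0 < Λ x r)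
    (hΛdom : ∀ (x : X) (r : ℝ), 0 < r → μ (ball x r) ≤ ENNReal.ofReal (Λ x r))
    (x : X) {r : ℝ} (hr : 0 < r) : μ.real (ball x r) ≤ Λ x r :=
  ENNReal.toReal_le_of_le_ofReal (hΛpos x r hr).le (hΛdom x r hr)

lemma pow_mul_measureReal_ball_le (hβ₆ : 0 ≤ β₆)
    (hfin : ∀ (x : X) (r : ℝ), 0 < r → μ (ball x r) ≠ ∞) (c : X) {ρ : ℝ} (hρ : 0 < ρ)
    {j : ℕ} (hstep : ∀ i < j, ENNReal.ofReal β₆ * μ (ball c (6 ^ i * ρ)) ≤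
      μ (ball c (6 ^ (i + 1) * ρ)))
    {i m : ℕ} (him : i + m ≤ j) :
    β₆ ^ m * μ.real (ball c (6 ^ i * ρ)) ≤ μ.real (ball c (6 ^ (i + m) * ρ)) := by
  induction m with
  | zero => simp
  | succ m ih =>
    have hstep' : β₆ * μ.real (ball c (6 ^ (i + m) * ρ)) ≤
        μ.real (ball c (6 ^ (i + m + 1) * ρ)) := by
      have := ENNReal.toReal_mono (hfin c _ (by positivity)) (hstep (i + m) (by omega))
      rwa [ENNReal.toReal_mul, ENNReal.toReal_ofReal hβ₆] at this
    calc β₆ ^ (m + 1) * μ.real (ball c (6 ^ i * ρ))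
        = β₆ * (β₆ ^ m * μ.real (ball c (6 ^ i * ρ))) := by ring
      _ ≤ β₆ * μ.real (ball c (6 ^ (i + m) * ρ)) :=
          mul_le_mul_of_nonneg_left (ih (by omega)) hβ₆
      _ ≤ μ.real (ball c (6 ^ (i + (m + 1)) * ρ)) := by rwa [← add_assoc]

lemma exists_six_pow_doubling (hΛ : IsDoublingFunction Λ Cl)
    (hΛdom : ∀ (x : X) (r : ℝ), 0 < r → μ (ball x r) ≤ ENNReal.ofReal (Λ x r))
    (hball : ∀ (x : X) (r : ℝ), 0 < r → 0 < μ (ball x r) ∧ μ (ball x r) < ⊤)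
    (hβ₆ : Cl ^ Real.logb 2 6 < β₆) (c : X) {ρ : ℝ} (hρ : 0 < ρ) :
    ∃ j : ℕ, μ (ball c (6 ^ (j + 1) * ρ)) ≤ ENNReal.ofReal β₆ * μ (ball c (6 ^ j * ρ)) := by
  by_contra! hnot
  set t := Cl ^ Real.logb 2 6
  have ht : 1 ≤ t := hΛ.one_le_rpow_logb c
  have hμ : 0 < μ.real (ball c ρ) := ENNReal.toReal_pos (hball c ρ hρ).1.ne' (hball c ρ hρ).2.ne
  have hgrowth : ∀ j : ℕ, (β₆ / t) ^ j ≤ Cl * Λ c ρ / μ.real (ball c ρ) := by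
    intro j
    have hlow := pow_mul_measureReal_ball_le (by linarith) (fun x r hr => (hball x r hr).2.ne)
      c hρ (j := j) (fun i _ => (hnot i).le) (i := 0) (m := j) (by omega)
    have hup := (measureReal_ball_le hΛ.pos hΛdom c (by positivity : 0 < 6 ^ j * ρ)).trans
      (hΛ.le_six_pow_mul c hρ j)
    simp only [pow_zero, one_mul, zero_add] at hlow
    rw [div_pow, le_div_iff₀ hμ, div_mul_eq_mul_div, div_le_iff₀ (by positivity)]
    nlinarith
  obtain ⟨j, hj⟩ := pow_unbounded_of_one_lt (Cl * Λ c ρ / μ.real (ball c ρ))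
    ((one_lt_div (by linarith)).2 hβ₆)
  exact (hgrowth j).not_gt hj

lemma tilde6_spec {c : X} {ρ : ℝ}
    (h : ∃ j : ℕ, μ (ball c (6 ^ (j + 1) * ρ)) ≤ ENNReal.ofReal β₆ * μ (ball c (6 ^ j * ρ))) :
    μ (ball c (6 ^ (tilde6 μ β₆ c ρ + 1) * ρ)) ≤
      ENNReal.ofReal β₆ * μ (ball c (6 ^ tilde6 μ β₆ c ρ * ρ)) := by
  classical
  rw [tilde6, dif_pos h]
  exact Nat.find_spec h

lemma mul_measure_ball_lt_of_lt_tilde6 {c : X} {ρ : ℝ}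
    (h : ∃ j : ℕ, μ (ball c (6 ^ (j + 1) * ρ)) ≤ ENNReal.ofReal β₆ * μ (ball c (6 ^ j * ρ)))
    {i : ℕ} (hi : i < tilde6 μ β₆ c ρ) :
    ENNReal.ofReal β₆ * μ (ball c (6 ^ i * ρ)) < μ (ball c (6 ^ (i + 1) * ρ)) := by
  classical
  rw [tilde6, dif_pos h] at hi
  exact not_le.1 (Nat.find_min h hi)

end SixPowDilates

noncomputable def deltaBound (Cl β₆ : ℝ) : ℝ :=
  Cl + Cl * Cl ^ Real.logb 2 6 / (1 - Cl ^ Real.logb 2 6 / β₆)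

lemma deltaBound_nonneg {X : Type*} {Λ : X → ℝ → ℝ} {Cl β₆ : ℝ} (hΛ : IsDoublingFunction Λ Cl)
    (x : X) (hβ₆ : Cl ^ Real.logb 2 6 < β₆) :
    0 ≤ deltaBound Cl β₆ := by
  have hCl := hΛ.one_le x
  have ht := hΛ.one_le_rpow_logb x
  have hq : Cl ^ Real.logb 2 6 / β₆ < 1 := (div_lt_one (by linarith)).2 hβ₆
  unfold deltaBound
  have : 0 < 1 - Cl ^ Real.logb 2 6 / β₆ := by linarith
  positivity

section Delta

variable {X : Type*} [MetricSpace X] [MeasurableSpace X] {μ : Measure X} {Λ : X → ℝ → ℝ}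
  {Cl β₆ : ℝ}

lemma lintegral_annulus_le (hΛ : IsDoublingFunction Λ Cl) (c : X) {s R : ℝ} (hs : 0 < s)
    (hR : μ (ball c R) ≠ ∞) :
    ∫⁻ x in ball c R \ ball c s, ENNReal.ofReal ((Λ c (dist x c))⁻¹) ∂μ ≤
      ENNReal.ofReal ((Λ c s)⁻¹ * μ.real (ball c R)) := by
  have hpt : ∀ x ∈ ball c R \ ball c s,
      ENNReal.ofReal ((Λ c (dist x c))⁻¹) ≤ ENNReal.ofReal ((Λ c s)⁻¹) := by
    rintro x ⟨-, hx⟩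
    have hsx : s ≤ dist x c := not_lt.1 hx
    exact ENNReal.ofReal_le_ofReal
      (inv_anti₀ (hΛ.pos c s hs) (hΛ.mono c s _ hs hsx))
  calc ∫⁻ x in ball c R \ ball c s, ENNReal.ofReal ((Λ c (dist x c))⁻¹) ∂μ
      ≤ ∫⁻ _ in ball c R \ ball c s, ENNReal.ofReal ((Λ c s)⁻¹) ∂μ :=
        setLIntegral_mono measurable_const hpt
    _ = ENNReal.ofReal ((Λ c s)⁻¹) * μ (ball c R \ ball c s) := setLIntegral_const _ _
    _ ≤ ENNReal.ofReal ((Λ c s)⁻¹) * μ (ball c R) := by gcongr; exact Set.sdiff_subset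
    _ = ENNReal.ofReal ((Λ c s)⁻¹ * μ.real (ball c R)) := by
        rw [ENNReal.ofReal_mul (inv_nonneg.2 (hΛ.pos c s hs).le), ofReal_measureReal hR]

lemma lintegral_six_pow_annuli_le (hΛ : IsDoublingFunction Λ Cl)
    (hfin : ∀ (x : X) (r : ℝ), 0 < r → μ (ball x r) ≠ ∞) (c : X) {ρ : ℝ} (hρ : 0 < ρ)
    (j : ℕ) :
    ∫⁻ x in ball c (6 ^ j * ρ) \ ball c ρ, ENNReal.ofReal ((Λ c (dist x c))⁻¹) ∂μ ≤
      ∑ i ∈ Finset.range j,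
        ENNReal.ofReal ((Λ c (6 ^ i * ρ))⁻¹ * μ.real (ball c (6 ^ (i + 1) * ρ))) := by
  induction j with
  | zero => simp
  | succ j ih =>
    rw [Finset.sum_range_succ]
    refine (lintegral_mono_set (sdiff_triangle _ (ball c (6 ^ j * ρ)) _)).trans <|
      (lintegral_union_le _ _ _).trans <| (add_le_add ?_ ih).trans_eq (add_comm _ _)
    exact lintegral_annulus_le hΛ c (by positivity) (hfin c _ (by positivity))

lemma inv_mul_measureReal_ball_le (hΛ : IsDoublingFunction Λ Cl)
    (hΛdom : ∀ (x : X) (r : ℝ), 0 < r → μ (ball x r) ≤ ENNReal.ofReal (Λ x r))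
    (hfin : ∀ (x : X) (r : ℝ), 0 < r → μ (ball x r) ≠ ∞) (hβ₆ : 0 < β₆) (c : X) {ρ : ℝ}
    (hρ : 0 < ρ) {j : ℕ} (hstep : ∀ i < j, ENNReal.ofReal β₆ * μ (ball c (6 ^ i * ρ)) ≤
      μ (ball c (6 ^ (i + 1) * ρ))) {i : ℕ} (hi : i < j) :
    (Λ c (6 ^ i * ρ))⁻¹ * μ.real (ball c (6 ^ (i + 1) * ρ)) ≤
      Cl * Cl ^ Real.logb 2 6 * (Cl ^ Real.logb 2 6 / β₆) ^ (j - 1 - i) := by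
  set t := Cl ^ Real.logb 2 6
  set m := j - 1 - i
  have hΛi := hΛ.pos c (6 ^ i * ρ) (by positivity)
  have hchain : β₆ ^ m * μ.real (ball c (6 ^ (i + 1) * ρ)) ≤ Cl * t ^ (m + 1) * Λ c (6 ^ i * ρ) :=
    calc β₆ ^ m * μ.real (ball c (6 ^ (i + 1) * ρ))
        ≤ μ.real (ball c (6 ^ (i + 1 + m) * ρ)) :=
          pow_mul_measureReal_ball_le hβ₆.le hfin c hρ hstep (by omega)
      _ ≤ Λ c (6 ^ (m + 1) * (6 ^ i * ρ)) := by
          rw [← mul_assoc, ← pow_add, show m + 1 + i = i + 1 + m by omega]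
          exact measureReal_ball_le hΛ.pos hΛdom c (by positivity)
      _ ≤ Cl * t ^ (m + 1) * Λ c (6 ^ i * ρ) := hΛ.le_six_pow_mul c (by positivity) (m + 1)
  rw [inv_mul_le_iff₀ hΛi, div_pow, ← mul_le_mul_iff_of_pos_left (pow_pos hβ₆ m)]
  calc β₆ ^ m * μ.real (ball c (6 ^ (i + 1) * ρ)) ≤ Cl * t ^ (m + 1) * Λ c (6 ^ i * ρ) := hchain
    _ = β₆ ^ m * (Λ c (6 ^ i * ρ) * (Cl * t * (t ^ m / β₆ ^ m))) := by
        field_simp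
        ring

lemma sum_inv_mul_measureReal_ball_le (hΛ : IsDoublingFunction Λ Cl)
    (hΛdom : ∀ (x : X) (r : ℝ), 0 < r → μ (ball x r) ≤ ENNReal.ofReal (Λ x r))
    (hfin : ∀ (x : X) (r : ℝ), 0 < r → μ (ball x r) ≠ ∞) (hβ₆ : Cl ^ Real.logb 2 6 < β₆)
    (c : X) {ρ : ℝ} (hρ : 0 < ρ) {j : ℕ}
    (hstep : ∀ i < j, ENNReal.ofReal β₆ * μ (ball c (6 ^ i * ρ)) ≤
      μ (ball c (6 ^ (i + 1) * ρ))) :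
    ∑ i ∈ Finset.range j, (Λ c (6 ^ i * ρ))⁻¹ * μ.real (ball c (6 ^ (i + 1) * ρ)) ≤
      Cl * Cl ^ Real.logb 2 6 / (1 - Cl ^ Real.logb 2 6 / β₆) := by
  set t := Cl ^ Real.logb 2 6
  have hCl := hΛ.one_le c
  have ht := hΛ.one_le_rpow_logb c
  have hβ₀ : 0 < β₆ := by linarith
  have hq : t / β₆ < 1 := (div_lt_one hβ₀).2 hβ₆
  calc _ ≤ ∑ i ∈ Finset.range j, Cl * t * (t / β₆) ^ (j - 1 - i) :=
        Finset.sum_le_sum fun i hi =>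
          inv_mul_measureReal_ball_le hΛ hΛdom hfin hβ₀ c hρ hstep (Finset.mem_range.1 hi)
    _ = Cl * t * ∑ i ∈ Finset.range j, (t / β₆) ^ i := by
        rw [Finset.mul_sum]
        exact Finset.sum_range_reflect (fun i => Cl * t * (t / β₆) ^ i) j
    _ ≤ Cl * t * ((t / β₆) ^ 0 / (1 - t / β₆)) := by
        rw [Finset.range_eq_Ico]
        exact mul_le_mul_of_nonneg_left (geom_sum_Ico_le_of_lt_one (by positivity) hq)
          (by positivity)
    _ = Cl * t / (1 - t / β₆) := by rw [pow_zero, mul_one_div]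

lemma delta_six_pow_le (hΛ : IsDoublingFunction Λ Cl)
    (hΛdom : ∀ (x : X) (r : ℝ), 0 < r → μ (ball x r) ≤ ENNReal.ofReal (Λ x r))
    (hfin : ∀ (x : X) (r : ℝ), 0 < r → μ (ball x r) ≠ ∞) (hβ₆ : Cl ^ Real.logb 2 6 < β₆)
    (c : X) {ρ : ℝ} (hρ : 0 < ρ) {j : ℕ}
    (hstep : ∀ i < j, ENNReal.ofReal β₆ * μ (ball c (6 ^ i * ρ)) ≤
      μ (ball c (6 ^ (i + 1) * ρ))) :
    delta μ Λ c ρ c (6 ^ j * ρ) ≤ deltaBound Cl β₆ := by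
  have hR : 0 < 6 ^ j * ρ := by positivity
  have houter : (Λ c (6 ^ j * ρ))⁻¹ * μ.real (ball c (2 * (6 ^ j * ρ))) ≤ Cl := by
    rw [inv_mul_le_iff₀ (hΛ.pos c _ hR)]
    calc μ.real (ball c (2 * (6 ^ j * ρ))) ≤ Λ c (2 * (6 ^ j * ρ)) :=
          measureReal_ball_le hΛ.pos hΛdom c (by positivity)
      _ ≤ Cl * Λ c (2 * (6 ^ j * ρ) / 2) := hΛ.le_mul_half c _ (by positivity)
      _ = Λ c (6 ^ j * ρ) * Cl := by ring_nf
  refine ENNReal.toReal_le_of_le_ofReal (deltaBound_nonneg hΛ c hβ₆) ?_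
  calc ∫⁻ x in ball c (2 * (6 ^ j * ρ)) \ ball c ρ, ENNReal.ofReal ((Λ c (dist x c))⁻¹) ∂μ
      ≤ (∑ i ∈ Finset.range j,
          ENNReal.ofReal ((Λ c (6 ^ i * ρ))⁻¹ * μ.real (ball c (6 ^ (i + 1) * ρ)))) +
        ENNReal.ofReal ((Λ c (6 ^ j * ρ))⁻¹ * μ.real (ball c (2 * (6 ^ j * ρ)))) :=
        (lintegral_mono_set (sdiff_triangle _ (ball c (6 ^ j * ρ)) _)).trans <|
          (lintegral_union_le _ _ _).trans <|
            (add_le_add (lintegral_annulus_le hΛ c hR (hfin c _ (by positivity)))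
              (lintegral_six_pow_annuli_le hΛ hfin c hρ j)).trans_eq (add_comm _ _)
    _ ≤ ENNReal.ofReal (Cl * Cl ^ Real.logb 2 6 / (1 - Cl ^ Real.logb 2 6 / β₆)) +
          ENNReal.ofReal Cl := by
        rw [← ENNReal.ofReal_sum_of_nonneg fun i _ =>
          mul_nonneg (inv_nonneg.2 (hΛ.pos c _ (by positivity)).le) measureReal_nonneg]
        exact add_le_add (ENNReal.ofReal_le_ofReal
          (sum_inv_mul_measureReal_ball_le hΛ hΛdom hfin hβ₆ c hρ hstep))
          (ENNReal.ofReal_le_ofReal houter)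
    _ = ENNReal.ofReal (deltaBound Cl β₆) := by
        have hq : Cl ^ Real.logb 2 6 / β₆ < 1 :=
          (div_lt_one (by linarith [hΛ.one_le_rpow_logb c])).2 hβ₆
        have hCl := hΛ.one_le c
        rw [← ENNReal.ofReal_add (by positivity) (by positivity), add_comm, deltaBound]

end Delta

-- `fB c ρ` is the number `f_B` attached to the ball `B(c, ρ)` in the definition of RBMO(μ),
-- and `K` bounds the RBMO norm.
structure RBMOBound {X : Type*} [MetricSpace X] [MeasurableSpace X] (μ : Measure X)
    (Λ : X → ℝ → ℝ) (f : X → ℝ) (fB : X → ℝ → ℝ) (K : ℝ) : Prop where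
  integrableOn : ∀ (c : X) (ρ : ℝ), 0 < ρ → IntegrableOn f (ball c ρ) μ
  setIntegral_le : ∀ (c : X) (ρ : ℝ), 0 < ρ →
    ∫ x in ball c ρ, |f x - fB c ρ| ∂μ ≤ K * (μ (ball c (2 * ρ))).toReal
  abs_sub_le_delta : ∀ (c c' : X) (ρ ρ' : ℝ), 0 < ρ → 0 < ρ' → ball c ρ ⊆ ball c' ρ' →
    |fB c ρ - fB c' ρ'| ≤ K * (1 + delta μ Λ c ρ c' ρ')

namespace RBMOBound

variable {X : Type*} [MetricSpace X] [MeasurableSpace X] {μ : Measure X} {Λ : X → ℝ → ℝ}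
  {f : X → ℝ} {fB : X → ℝ → ℝ} {K r β₆ : ℝ}

lemma abs_rpow_sub_rpow_le (hf : RBMOBound μ Λ f fB K) (hK : 0 ≤ K) (hr0 : 0 ≤ r)
    (hr1 : r ≤ 1) {c c' : X} {ρ ρ' : ℝ} (hρ : 0 < ρ) (hρ' : 0 < ρ')
    (hsub : ball c ρ ⊆ ball c' ρ') :
    |(|fB c ρ| ^ r) - |fB c' ρ'| ^ r| ≤ K ^ r * (1 + delta μ Λ c ρ c' ρ') :=
  (Real.abs_abs_rpow_sub_abs_rpow_le hr0 hr1 _ _).trans <|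
    Real.rpow_le_rpow_mul_of_le_mul hr0 hr1 (abs_nonneg _) hK
      (le_add_of_nonneg_right ENNReal.toReal_nonneg) (hf.abs_sub_le_delta c c' ρ ρ' hρ hρ' hsub)

lemma abs_setAverage_sub_le_of_doubling (hf : RBMOBound μ Λ f fB K) (hK : 0 ≤ K)
    (hr0 : 0 ≤ r) (hr1 : r ≤ 1) (hβ₆ : 1 ≤ β₆) {c : X} {ρ : ℝ} (hρ : 0 < ρ)
    (hB : 0 < μ (ball c ρ) ∧ μ (ball c ρ) < ⊤)
    (hdb : μ (ball c (6 * ρ)) ≤ ENNReal.ofReal β₆ * μ (ball c ρ)) :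
    |(⨍ z in ball c ρ, |f z| ^ r ∂μ) - |fB c ρ| ^ r| ≤ K ^ r * β₆ := by
  have hμ : 0 < μ.real (ball c ρ) := ENNReal.toReal_pos hB.1.ne' hB.2.ne
  have h2B : μ.real (ball c (2 * ρ)) ≤ β₆ * μ.real (ball c ρ) := by
    have := ENNReal.toReal_mono (ENNReal.mul_ne_top ENNReal.ofReal_ne_top hB.2.ne)
      ((measure_mono (ball_subset_ball (by linarith : 2 * ρ ≤ 6 * ρ))).trans hdb)
    rwa [ENNReal.toReal_mul, ENNReal.toReal_ofReal (by linarith)] at this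
  have havg : ⨍ z in ball c ρ, |f z - fB c ρ| ∂μ ≤ K * β₆ := by
    rw [setAverage_eq, smul_eq_mul, ← div_eq_inv_mul, div_le_iff₀ hμ]
    calc ∫ z in ball c ρ, |f z - fB c ρ| ∂μ ≤ K * μ.real (ball c (2 * ρ)) :=
          hf.setIntegral_le c ρ hρ
      _ ≤ K * β₆ * μ.real (ball c ρ) := by rw [mul_assoc]; gcongr
  have havg_nonneg : 0 ≤ ⨍ z in ball c ρ, |f z - fB c ρ| ∂μ := by
    rw [setAverage_eq]
    exact smul_nonneg (inv_nonneg.2 measureReal_nonneg) (integral_nonneg fun _ => abs_nonneg _)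
  exact (abs_setAverage_abs_rpow_sub_le hB.1.ne' hB.2.ne (hf.integrableOn c ρ hρ) _ hr0 hr1).trans
    (Real.rpow_le_rpow_mul_of_le_mul hr0 hr1 havg_nonneg hK hβ₆ havg)

lemma setIntegral_abs_sub_rpow_le (hf : RBMOBound μ Λ f fB K) (hK : 0 ≤ K) (hr0 : 0 ≤ r)
    (hr1 : r ≤ 1) (hball : ∀ (x : X) (r : ℝ), 0 < r → 0 < μ (ball x r) ∧ μ (ball x r) < ⊤)
    {c : X} {ρ : ℝ} (hρ : 0 < ρ) :
    ∫ y in ball c ρ, |f y - fB c ρ| ^ r ∂μ ≤ K ^ r * μ.real (ball c (5 * ρ)) := by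
  have hB := hball c ρ hρ
  have hw : 0 ≤ μ.real (ball c (5 * ρ)) := measureReal_nonneg
  have hfin5 := (hball c (5 * ρ) (by linarith)).2.ne
  have hsub : ∀ {s : ℝ}, s ≤ 5 * ρ → μ.real (ball c s) ≤ μ.real (ball c (5 * ρ)) :=
    fun hs => measureReal_mono (ball_subset_ball hs) hfin5
  have hint : ∫ y in ball c ρ, |f y - fB c ρ| ∂μ ≤ K * μ.real (ball c (5 * ρ)) :=
    (hf.setIntegral_le c ρ hρ).trans (mul_le_mul_of_nonneg_left (hsub (by linarith)) hK)
  calc ∫ y in ball c ρ, |f y - fB c ρ| ^ r ∂μ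
      ≤ (∫ y in ball c ρ, |f y - fB c ρ| ∂μ) ^ r * μ.real (ball c ρ) ^ (1 - r) :=
        setIntegral_rpow_le hB.1.ne' hB.2.ne (fun _ => abs_nonneg _)
          ((hf.integrableOn c ρ hρ).sub (integrableOn_const hB.2.ne)).abs hr0 hr1
    _ ≤ (K * μ.real (ball c (5 * ρ))) ^ r * μ.real (ball c (5 * ρ)) ^ (1 - r) := by
        refine mul_le_mul (Real.rpow_le_rpow (integral_nonneg fun _ => abs_nonneg _) hint hr0)
          (Real.rpow_le_rpow measureReal_nonneg (hsub (by linarith)) (by linarith))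
          (Real.rpow_nonneg measureReal_nonneg _) (Real.rpow_nonneg (mul_nonneg hK hw) _)
    _ = K ^ r * μ.real (ball c (5 * ρ)) := by
        rw [Real.mul_rpow hK hw, mul_assoc, ← Real.rpow_add' hw (by norm_num), add_sub_cancel,
          Real.rpow_one]

lemma setIntegral_abs_sub_setAverage_le (hf : RBMOBound μ Λ f fB K) (hK : 0 ≤ K)
    (hr0 : 0 ≤ r) (hr1 : r ≤ 1) (hβ₆ : 1 ≤ β₆)
    (hball : ∀ (x : X) (r : ℝ), 0 < r → 0 < μ (ball x r) ∧ μ (ball x r) < ⊤)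
    {c : X} {ρ : ℝ} (hρ : 0 < ρ) {j : ℕ}
    (hdb : μ (ball c (6 ^ (j + 1) * ρ)) ≤ ENNReal.ofReal β₆ * μ (ball c (6 ^ j * ρ)))
    {A : ℝ} (hA : delta μ Λ c ρ c (6 ^ j * ρ) ≤ A) :
    ∫ y in ball c ρ, |(|f y| ^ r) - ⨍ z in ball c (6 ^ j * ρ), |f z| ^ r ∂μ| ∂μ ≤
      K ^ r * (2 + A + β₆) * μ.real (ball c (5 * ρ)) := by
  set m := ⨍ z in ball c (6 ^ j * ρ), |f z| ^ r ∂μ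
  have hB := hball c ρ hρ
  have hρj : 0 < 6 ^ j * ρ := by positivity
  have hK' : 0 ≤ K ^ r := Real.rpow_nonneg hK r
  have hsub : ball c ρ ⊆ ball c (6 ^ j * ρ) :=
    ball_subset_ball (le_mul_of_one_le_left hρ.le (one_le_pow₀ (by norm_num)))
  have hconst : |(|fB c ρ| ^ r) - m| ≤ K ^ r * (1 + A) + K ^ r * β₆ := by
    have hdilate := hf.abs_setAverage_sub_le_of_doubling hK hr0 hr1 hβ₆ hρj (hball c _ hρj)
      (by rwa [← mul_assoc, ← pow_succ'])
    have hpair := (hf.abs_rpow_sub_rpow_le hK hr0 hr1 hρ hρj hsub).trans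
      (mul_le_mul_of_nonneg_left (by linarith : 1 + delta μ Λ c ρ c (6 ^ j * ρ) ≤ 1 + A) hK')
    rw [abs_sub_comm] at hdilate
    exact (abs_sub_le _ _ _).trans (add_le_add hpair hdilate)
  have hfr : IntegrableOn (fun y => |f y| ^ r) (ball c ρ) μ :=
    IntegrableOn.rpow_of_le_one (hf.integrableOn c ρ hρ).abs hB.2.ne (fun _ => abs_nonneg _)
      hr0 hr1
  have hosc : IntegrableOn (fun y => |f y - fB c ρ| ^ r) (ball c ρ) μ :=
    IntegrableOn.rpow_of_le_one ((hf.integrableOn c ρ hρ).sub (integrableOn_const hB.2.ne)).abs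
      hB.2.ne (fun _ => abs_nonneg _) hr0 hr1
  calc ∫ y in ball c ρ, |(|f y| ^ r) - m| ∂μ
      ≤ ∫ y in ball c ρ, (|f y - fB c ρ| ^ r + |(|fB c ρ| ^ r) - m|) ∂μ :=
        integral_mono (hfr.sub (integrableOn_const hB.2.ne)).abs
          (hosc.add (integrableOn_const hB.2.ne)) fun y =>
            (abs_sub_le _ _ _).trans <| add_le_add_left
              (Real.abs_abs_rpow_sub_abs_rpow_le hr0 hr1 (f y) (fB c ρ)) _
    _ = (∫ y in ball c ρ, |f y - fB c ρ| ^ r ∂μ) + μ.real (ball c ρ) * |(|fB c ρ| ^ r) - m| := by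
        rw [integral_add hosc (integrableOn_const hB.2.ne), setIntegral_const, smul_eq_mul]
    _ ≤ K ^ r * μ.real (ball c (5 * ρ)) +
          μ.real (ball c (5 * ρ)) * (K ^ r * (1 + A) + K ^ r * β₆) := by
        refine add_le_add (hf.setIntegral_abs_sub_rpow_le hK hr0 hr1 hball hρ)
          (mul_le_mul ?_ hconst (abs_nonneg _) measureReal_nonneg)
        exact measureReal_mono (ball_subset_ball (by linarith : ρ ≤ 5 * ρ))
          (hball c (5 * ρ) (by linarith)).2.ne
    _ = K ^ r * (2 + A + β₆) * μ.real (ball c (5 * ρ)) := by ring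

lemma abs_setAverage_sub_setAverage_le (hf : RBMOBound μ Λ f fB K) (hK : 0 ≤ K)
    (hr0 : 0 ≤ r) (hr1 : r ≤ 1) (hβ₆ : 1 ≤ β₆)
    (hball : ∀ (x : X) (r : ℝ), 0 < r → 0 < μ (ball x r) ∧ μ (ball x r) < ⊤)
    {cB cS : X} {rB rS : ℝ} (hrB : 0 < rB) (hrS : 0 < rS) (hBS : ball cB rB ⊆ ball cS rS)
    (hdB : μ (ball cB (6 * rB)) ≤ ENNReal.ofReal β₆ * μ (ball cB rB))
    (hdS : μ (ball cS (6 * rS)) ≤ ENNReal.ofReal β₆ * μ (ball cS rS)) :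
    |(⨍ z in ball cB rB, |f z| ^ r ∂μ) - ⨍ z in ball cS rS, |f z| ^ r ∂μ| ≤
      K ^ r * (1 + 2 * β₆) * (1 + delta μ Λ cB rB cS rS) := by
  have hδ : 0 ≤ delta μ Λ cB rB cS rS := ENNReal.toReal_nonneg
  have hK' : 0 ≤ K ^ r := Real.rpow_nonneg hK r
  have hB := hf.abs_setAverage_sub_le_of_doubling hK hr0 hr1 hβ₆ hrB (hball cB rB hrB) hdB
  have hS := hf.abs_setAverage_sub_le_of_doubling hK hr0 hr1 hβ₆ hrS (hball cS rS hrS) hdS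
  have hBS' := hf.abs_rpow_sub_rpow_le hK hr0 hr1 hrB hrS hBS
  rw [abs_sub_comm] at hS
  calc _ ≤ K ^ r * β₆ + (K ^ r * (1 + delta μ Λ cB rB cS rS) + K ^ r * β₆) :=
        (abs_sub_le _ _ _).trans (add_le_add hB ((abs_sub_le _ _ _).trans (add_le_add hBS' hS)))
    _ ≤ K ^ r * (1 + 2 * β₆) * (1 + delta μ Λ cB rB cS rS) := by
        nlinarith [mul_nonneg hK' (mul_nonneg (by linarith : (0 : ℝ) ≤ β₆) hδ)]

lemma msharp_abs_rpow_le {Cl : ℝ} (hf : RBMOBound μ Λ f fB K) (hK : 0 ≤ K) (hr0 : 0 ≤ r)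
    (hr1 : r ≤ 1) (hΛ : IsDoublingFunction Λ Cl)
    (hΛdom : ∀ (x : X) (r : ℝ), 0 < r → μ (ball x r) ≤ ENNReal.ofReal (Λ x r))
    (hball : ∀ (x : X) (r : ℝ), 0 < r → 0 < μ (ball x r) ∧ μ (ball x r) < ⊤)
    (hβ₆ : Cl ^ Real.logb 2 6 < β₆) (x : X) :
    msharp μ Λ β₆ (fun y => |f y| ^ r) x ≤
      ENNReal.ofReal (K ^ r * (2 + deltaBound Cl β₆ + 2 * β₆)) := by
  have hβ₆' : 1 ≤ β₆ := (hΛ.one_le_rpow_logb x).trans hβ₆.le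
  have hA := deltaBound_nonneg hΛ x hβ₆
  have hK' : 0 ≤ K ^ r := Real.rpow_nonneg hK r
  refine sup_le (iSup₂_le fun c ρ => iSup_le fun ⟨hρ, _⟩ => ?_)
    (iSup₂_le fun cB rB => iSup₂_le fun cS rS => iSup_le fun ⟨hrB, hrS, _, hBS, hdB, hdS⟩ => ?_)
  · have hex := exists_six_pow_doubling hΛ hΛdom hball hβ₆ c hρ
    have hdelta := delta_six_pow_le hΛ hΛdom (fun x r hr => (hball x r hr).2.ne) hβ₆ c hρ
      fun i hi => (mul_measure_ball_lt_of_lt_tilde6 hex hi).le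
    have h5 := hball c (5 * ρ) (by linarith)
    refine ENNReal.ofReal_le_ofReal ((div_le_iff₀ (ENNReal.toReal_pos h5.1.ne' h5.2.ne)).2 ?_)
    refine (hf.setIntegral_abs_sub_setAverage_le hK hr0 hr1 hβ₆' hball hρ (tilde6_spec hex)
      hdelta).trans ?_
    exact mul_le_mul_of_nonneg_right (mul_le_mul_of_nonneg_left (by linarith) hK')
      measureReal_nonneg
  · have hδ : 0 ≤ delta μ Λ cB rB cS rS := ENNReal.toReal_nonneg
    refine ENNReal.ofReal_le_ofReal ((div_le_iff₀ (by linarith)).2 ?_)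
    refine (hf.abs_setAverage_sub_setAverage_le hK hr0 hr1 hβ₆' hball hrB hrS hBS hdB hdS).trans ?_
    gcongr
    linarith

end RBMOBound

theorem msharp_r_bounded_of_rbmo_general {X : Type*} [MetricSpace X] [MeasurableSpace X]
    (μ : Measure X) (Λ : X → ℝ → ℝ) (Cl β₆ : ℝ)
    (hΛpos : ∀ (x : X) (r : ℝ), 0 < r → 0 < Λ x r)
    (hΛmono : ∀ (x : X) (r s : ℝ), 0 < r → r ≤ s → Λ x r ≤ Λ x s)
    (hΛdom : ∀ (x : X) (r : ℝ), 0 < r → μ (ball x r) ≤ ENNReal.ofReal (Λ x r))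
    (hΛdouble : ∀ (x : X) (r : ℝ), 0 < r → Λ x r ≤ Cl * Λ x (r / 2))
    (hball : ∀ (x : X) (r : ℝ), 0 < r → 0 < μ (ball x r) ∧ μ (ball x r) < ⊤)
    (hβ₆ : Cl ^ Real.logb 2 6 < β₆)
    (r : ℝ) (hr : r ∈ Set.Ioo (0 : ℝ) 1) :
    ∃ C : ℝ, 0 < C ∧ ∀ (f : X → ℝ) (fB : X → ℝ → ℝ) (K : ℝ), 0 ≤ K →
      (∀ (c : X) (ρ : ℝ), 0 < ρ → IntegrableOn f (ball c ρ) μ) →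
      (∀ (c : X) (ρ : ℝ), 0 < ρ →
        ∫ x in ball c ρ, |f x - fB c ρ| ∂μ ≤ K * (μ (ball c (2 * ρ))).toReal) →
      (∀ (c c' : X) (ρ ρ' : ℝ), 0 < ρ → 0 < ρ' → ball c ρ ⊆ ball c' ρ' →
        |fB c ρ - fB c' ρ'| ≤ K * (1 + delta μ Λ c ρ c' ρ')) →
      ∀ x : X, (msharp μ Λ β₆ (fun y => |f y| ^ r) x) ^ (1 / r) ≤ ENNReal.ofReal (C * K) := by
  obtain ⟨hr0, hr1⟩ := hr
  have hΛ : IsDoublingFunction Λ Cl := ⟨hΛpos, hΛmono, hΛdouble⟩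
  set D := 2 + deltaBound Cl β₆ + 2 * β₆
  -- `D ≥ 0` needs a point of `X`, which is only available after `C` has been chosen.
  refine ⟨max 1 (D ^ (1 / r)), lt_max_of_lt_left one_pos,
    fun f fB K hK hint hosc hsub x => ?_⟩
  have hf : RBMOBound μ Λ f fB K := ⟨hint, hosc, hsub⟩
  have hD : 0 ≤ D := by
    linarith [deltaBound_nonneg hΛ x hβ₆, (hΛ.one_le_rpow_logb x).trans hβ₆.le]
  calc (msharp μ Λ β₆ (fun y => |f y| ^ r) x) ^ (1 / r)
      ≤ ENNReal.ofReal (K ^ r * D) ^ (1 / r) :=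
        ENNReal.rpow_le_rpow (hf.msharp_abs_rpow_le hK hr0.le hr1.le hΛ hΛdom hball hβ₆ x)
          (by positivity)
    _ = ENNReal.ofReal (D ^ (1 / r) * K) := by
        rw [ENNReal.ofReal_rpow_of_nonneg (by positivity) (by positivity),
          Real.mul_rpow (by positivity) hD, ← Real.rpow_mul hK, mul_one_div_cancel hr0.ne',
          Real.rpow_one, mul_comm]
    _ ≤ ENNReal.ofReal (max 1 (D ^ (1 / r)) * K) := by
        gcongr
        exact le_max_right _ _

/-- (Lemma 3.1) For `r ∈ (0,1)` and `f ∈ RBMO(μ)`, the maximal function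
`M♯_r(f) = [M♯(|f|^r)]^{1/r}` is in `L^∞(μ)` with `‖M♯_r f‖_∞ ≤ C ‖f‖_{RBMO}`. -/
theorem msharp_r_bounded_of_rbmo {X : Type*} [MetricSpace X] [MeasurableSpace X]
    [BorelSpace X] (μ : Measure X) (Λ : X → ℝ → ℝ) (Cl β₆ : ℝ) (N₀ : ℕ)
    (hΛpos : ∀ (x : X) (r : ℝ), 0 < r → 0 < Λ x r)
    (hΛmono : ∀ (x : X) (r s : ℝ), 0 < r → r ≤ s → Λ x r ≤ Λ x s)
    (hΛdom : ∀ (x : X) (r : ℝ), 0 < r → μ (ball x r) ≤ ENNReal.ofReal (Λ x r))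
    (hΛdouble : ∀ (x : X) (r : ℝ), 0 < r → Λ x r ≤ Cl * Λ x (r / 2))
    (hgd : ∀ (x : X) (r : ℝ), ∃ s : Finset X,
      s.card ≤ N₀ ∧ ball x r ⊆ ⋃ y ∈ s, ball y (r / 2))
    (hball : ∀ (x : X) (r : ℝ), 0 < r → 0 < μ (ball x r) ∧ μ (ball x r) < ⊤)
    (hβ₆ : Cl ^ Real.logb 2 6 < β₆)
    (r : ℝ) (hr : r ∈ Set.Ioo (0 : ℝ) 1) :
    ∃ C : ℝ, 0 < C ∧ ∀ (f : X → ℝ) (fB : X → ℝ → ℝ) (K : ℝ), 0 ≤ K →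
      (∀ (c : X) (ρ : ℝ), 0 < ρ → IntegrableOn f (ball c ρ) μ) →
      (∀ (c : X) (ρ : ℝ), 0 < ρ →
        ∫ x in ball c ρ, |f x - fB c ρ| ∂μ ≤ K * (μ (ball c (2 * ρ))).toReal) →
      (∀ (c c' : X) (ρ ρ' : ℝ), 0 < ρ → 0 < ρ' → ball c ρ ⊆ ball c' ρ' →
        |fB c ρ - fB c' ρ'| ≤ K * (1 + delta μ Λ c ρ c' ρ')) →
      ∀ x : X, (msharp μ Λ β₆ (fun y => |f y| ^ r) x) ^ (1 / r) ≤ ENNReal.ofReal (C * K) :=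
  msharp_r_bounded_of_rbmo_general μ Λ Cl β₆ hΛpos hΛmono hΛdom hΛdouble hball hβ₆ r hr
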